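/- Fix k ≥ 2, β > 0, q ≥ 0, and σ₁ ∈ {-1,1}^k, and set p_σ = e^{q(σ·σ₁)²}/H(q) where H(q) = ∑_σ e^{q(σ·σ₁)²}. If q satisfies q = (β²/(2k(k−1)))(H'(q)/H(q) − k), then F((p_σ)) := −∑_σ p_σ log p_σ + (β²/4)∑_{σ,σ'} p_σ p_{σ'} (σ·σ')² satisfies F((p_σ)) = −(k(k−1)/β²)q² − kq + log H(q) + β²k/4. -/
import Mathlib


open Finset Real

/-- The real sign of a Boolean spin: `true ↦ 1`, `false ↦ -1`. -/
noncomputable def sgn (b : Bool) : ℝ := if b then 1 else -1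

/-- Standard inner product of two spin vectors in `{-1,1}^k`. -/
noncomputable def sdot {k : ℕ} (σ τ : Fin k → Bool) : ℝ := ∑ i, sgn (σ i) * sgn (τ i)

/-- The functional `F((p_σ)) = −∑_σ p_σ log p_σ + (β²/4) ∑_{σ,σ'} p_σ p_{σ'} (σ·σ')²`.
(Note `Real.log 0 = 0`, so the convention `0 log 0 = 0` holds automatically.) -/
noncomputable def Ffun {k : ℕ} (β : ℝ) (p : (Fin k → Bool) → ℝ) : ℝ :=
  -∑ σ, p σ * Real.log (p σ) + β ^ 2 / 4 * ∑ σ, ∑ σ', p σ * p σ' * (sdot σ σ') ^ 2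

lemma sgn_mul_self (b : Bool) : sgn b * sgn b = 1 := by cases b <;> norm_num [sgn]
lemma sgn_beq (b c : Bool) : sgn (b == c) = sgn b * sgn c := by
  cases b <;> cases c <;> norm_num [sgn]

noncomputable def Wq {k : ℕ} (q : ℝ) (τ : Fin k → Bool) : ℝ :=
  Real.exp (q * (∑ l, sgn (τ l)) ^ 2)

noncomputable def Mq (k : ℕ) (q : ℝ) (i j : Fin k) : ℝ :=
  ∑ τ : Fin k → Bool, Wq q τ * (sgn (τ i) * sgn (τ j))

def permComp {k : ℕ} (pp : Equiv.Perm (Fin k)) : (Fin k → Bool) ≃ (Fin k → Bool) where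
  toFun τ := τ ∘ pp
  invFun τ := τ ∘ pp.symm
  left_inv τ := by funext l; simp
  right_inv τ := by funext l; simp

lemma Wq_comp {k : ℕ} (q : ℝ) (pp : Equiv.Perm (Fin k)) (τ : Fin k → Bool) :
    Wq q (τ ∘ pp) = Wq q τ := by
  unfold Wq
  rw [show (∑ l, sgn ((τ ∘ ⇑pp) l)) = ∑ l, sgn (τ l) from Equiv.sum_comp pp (fun l => sgn (τ l))]

lemma Mq_perm (k : ℕ) (q : ℝ) (pp : Equiv.Perm (Fin k)) (i j : Fin k) :
    Mq k q (pp i) (pp j) = Mq k q i j := by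
  unfold Mq
  calc ∑ τ : Fin k → Bool, Wq q τ * (sgn (τ (pp i)) * sgn (τ (pp j)))
      = ∑ τ : Fin k → Bool,
          Wq q ((permComp pp) τ) * (sgn (((permComp pp) τ) i) * sgn (((permComp pp) τ) j)) := by
        refine Finset.sum_congr rfl fun τ _ => ?_
        rw [show ((permComp pp) τ) = τ ∘ pp from rfl, Wq_comp]
        rfl
    _ = ∑ τ : Fin k → Bool, Wq q τ * (sgn (τ i) * sgn (τ j)) :=
        Equiv.sum_comp (permComp pp) (fun τ => Wq q τ * (sgn (τ i) * sgn (τ j)))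

lemma Mq_const (k : ℕ) (q : ℝ) {i j i' j' : Fin k} (hij : i ≠ j) (h' : i' ≠ j') :
    Mq k q i j = Mq k q i' j' := by
  set p1 := Equiv.swap i i'
  set j2 := p1 j
  set p2 := Equiv.swap j2 j'
  have hji : j2 ≠ i' := by
    simp only [j2, p1]
    intro h
    have := p1.injective (a₁ := j) (a₂ := i) (by simpa [p1, Equiv.swap_apply_left] using h)
    exact hij this.symm
  have hpi : (p1.trans p2) i = i' := by
    simp only [Equiv.trans_apply, p1, Equiv.swap_apply_left]
    exact Equiv.swap_apply_of_ne_of_ne (Ne.symm hji) h'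
  have hpj : (p1.trans p2) j = j' := by
    simp only [Equiv.trans_apply]
    exact Equiv.swap_apply_left j2 j'
  rw [← hpi, ← hpj, Mq_perm]

lemma Mq_diag (k : ℕ) (q : ℝ) (i : Fin k) :
    Mq k q i i = ∑ τ : Fin k → Bool, Wq q τ := by
  unfold Mq
  exact Finset.sum_congr rfl fun τ _ => by rw [sgn_mul_self, mul_one]

lemma sum_matrix {k : ℕ} (g : Fin k → Fin k → ℝ) (a b : ℝ)
    (hd : ∀ i, g i i = a) (ho : ∀ i j, i ≠ j → g i j = b) :
    ∑ i, ∑ j, g i j = k * a + ((k : ℝ) ^ 2 - k) * b := by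
  have hrow : ∀ i : Fin k, ∑ j, g i j = a + ((k : ℝ) - 1) * b := by
    intro i
    have h1 : ∀ j, g i j = (if j = i then a - b else 0) + b := by
      intro j
      by_cases h : j = i
      · subst h; simp [hd]
      · simp [h, ho i j (Ne.symm h)]
    rw [Finset.sum_congr rfl fun j _ => h1 j, Finset.sum_add_distrib,
      Finset.sum_ite_eq' univ i (fun _ => a - b)]
    simp [Finset.card_univ]
    ring
  rw [Finset.sum_congr rfl fun i _ => hrow i, Finset.sum_const, Finset.card_univ]
  simp [Fintype.card_fin, nsmul_eq_mul]
  ring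

/-- the xnor involution relative to σ₁ -/
def flipE {k : ℕ} (σ₁ : Fin k → Bool) : (Fin k → Bool) ≃ (Fin k → Bool) :=
  Function.Involutive.toPerm (fun σ => fun i => σ i == σ₁ i)
    (by
      intro σ; funext i
      show ((σ i == σ₁ i) == σ₁ i) = σ i
      cases σ i <;> cases σ₁ i <;> rfl)

lemma sgn_flipE {k : ℕ} (σ₁ σ : Fin k → Bool) (i : Fin k) :
    sgn ((flipE σ₁ σ) i) = sgn (σ i) * sgn (σ₁ i) := by
  show sgn (σ i == σ₁ i) = _
  exact sgn_beq _ _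

lemma sdot_flipE {k : ℕ} (σ₁ σ : Fin k → Bool) :
    sdot σ σ₁ = ∑ l, sgn ((flipE σ₁ σ) l) := by
  unfold sdot
  exact Finset.sum_congr rfl fun l _ => (sgn_flipE σ₁ σ l).symm

lemma sdot_flipE2 {k : ℕ} (σ₁ σ σ' : Fin k → Bool) :
    sdot σ σ' = sdot (flipE σ₁ σ) (flipE σ₁ σ') := by
  unfold sdot
  refine Finset.sum_congr rfl fun l _ => ?_
  rw [sgn_flipE, sgn_flipE]
  linear_combination (-(sgn (σ l) * sgn (σ' l))) * sgn_mul_self (σ₁ l)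

lemma swap4 {k : ℕ} (Y : (Fin k → Bool) → (Fin k → Bool) → Fin k → Fin k → ℝ) :
    ∑ τ : Fin k → Bool, ∑ τ' : Fin k → Bool, ∑ i, ∑ j, Y τ τ' i j
      = ∑ i, ∑ j, ∑ τ : Fin k → Bool, ∑ τ' : Fin k → Bool, Y τ τ' i j := by
  calc ∑ τ : Fin k → Bool, ∑ τ' : Fin k → Bool, ∑ i, ∑ j, Y τ τ' i j
      = ∑ p : (Fin k → Bool) × (Fin k → Bool), ∑ r : Fin k × Fin k, Y p.1 p.2 r.1 r.2 := by
        rw [Fintype.sum_prod_type]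
        refine Finset.sum_congr rfl fun τ _ => ?_
        refine Finset.sum_congr rfl fun τ' _ => ?_
        exact (Fintype.sum_prod_type (fun r : Fin k × Fin k => Y τ τ' r.1 r.2)).symm
    _ = ∑ r : Fin k × Fin k, ∑ p : (Fin k → Bool) × (Fin k → Bool), Y p.1 p.2 r.1 r.2 :=
        Finset.sum_comm
    _ = ∑ i, ∑ j, ∑ τ : Fin k → Bool, ∑ τ' : Fin k → Bool, Y τ τ' i j := by
        rw [Fintype.sum_prod_type]
        refine Finset.sum_congr rfl fun i _ => ?_
        refine Finset.sum_congr rfl fun j _ => ?_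
        exact Fintype.sum_prod_type (fun p : (Fin k → Bool) × (Fin k → Bool) => Y p.1 p.2 i j)

lemma swap3 {k : ℕ} (Y : (Fin k → Bool) → Fin k → Fin k → ℝ) :
    ∑ τ : Fin k → Bool, ∑ i, ∑ j, Y τ i j = ∑ i, ∑ j, ∑ τ : Fin k → Bool, Y τ i j := by
  calc ∑ τ : Fin k → Bool, ∑ i, ∑ j, Y τ i j
      = ∑ τ : Fin k → Bool, ∑ r : Fin k × Fin k, Y τ r.1 r.2 :=
        Finset.sum_congr rfl fun τ _ =>
          (Fintype.sum_prod_type (fun r : Fin k × Fin k => Y τ r.1 r.2)).symm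
    _ = ∑ r : Fin k × Fin k, ∑ τ : Fin k → Bool, Y τ r.1 r.2 := Finset.sum_comm
    _ = ∑ i, ∑ j, ∑ τ : Fin k → Bool, Y τ i j :=
        Fintype.sum_prod_type (fun r : Fin k × Fin k => ∑ τ : Fin k → Bool, Y τ r.1 r.2)

theorem stmt18 (k : ℕ) (hk : 2 ≤ k) (β : ℝ) (hβ : 0 < β) (q : ℝ) (hq : 0 ≤ q)
    (σ₁ : Fin k → Bool)
    (H H' : ℝ → ℝ)
    (hH : ∀ q, H q = ∑ σ : Fin k → Bool, Real.exp (q * (sdot σ σ₁) ^ 2))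
    (hH' : ∀ q, H' q = ∑ σ : Fin k → Bool, (sdot σ σ₁) ^ 2 * Real.exp (q * (sdot σ σ₁) ^ 2))
    (hstat : q = β ^ 2 / (2 * k * (k - 1)) * (H' q / H q - k)) :
    Ffun β (fun σ => Real.exp (q * (sdot σ σ₁) ^ 2) / H q) =
      -((k : ℝ) * (k - 1) / β ^ 2) * q ^ 2 - k * q + Real.log (H q) + β ^ 2 * k / 4 := by
  set Z : ℝ := ∑ τ : Fin k → Bool, Wq q τ with hZdef
  set i0 : Fin k := ⟨0, by omega⟩ with hi0
  set j0 : Fin k := ⟨1, by omega⟩ with hj0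
  have hij : i0 ≠ j0 := by simp [hi0, hj0, Fin.ext_iff]
  set c : ℝ := Mq k q i0 j0 with hcdef
  set K : ℝ := (k : ℝ) ^ 2 - k with hKdef
  have hZpos : 0 < Z := by
    rw [hZdef]
    exact Finset.sum_pos (fun τ _ => Real.exp_pos _) Finset.univ_nonempty
  have hZne : Z ≠ 0 := ne_of_gt hZpos
  -- exp(q * sdot σ σ₁ ^ 2) = Wq q (flipE σ₁ σ)
  have hexpW : ∀ σ : Fin k → Bool, Real.exp (q * (sdot σ σ₁) ^ 2) = Wq q (flipE σ₁ σ) := by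
    intro σ
    rw [sdot_flipE σ₁ σ]
    rfl
  have hHZ : H q = Z := by
    rw [hH, hZdef]
    calc ∑ σ : Fin k → Bool, Real.exp (q * (sdot σ σ₁) ^ 2)
        = ∑ σ : Fin k → Bool, Wq q (flipE σ₁ σ) := Finset.sum_congr rfl fun σ _ => hexpW σ
      _ = ∑ τ : Fin k → Bool, Wq q τ := Equiv.sum_comp (flipE σ₁) (Wq q)
  -- square expansion
  have hsq : ∀ τ τ' : Fin k → Bool,
      (sdot τ τ') ^ 2 = ∑ i, ∑ j, (sgn (τ i) * sgn (τ' i)) * (sgn (τ j) * sgn (τ' j)) := by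
    intro τ τ'
    rw [sq]
    unfold sdot
    rw [Finset.sum_mul_sum]
  have hS2 : ∀ τ : Fin k → Bool,
      (∑ l, sgn (τ l)) ^ 2 = ∑ i, ∑ j, sgn (τ i) * sgn (τ j) := by
    intro τ
    rw [sq, Finset.sum_mul_sum]
  have hMdiag : ∀ i, Mq k q i i = Z := fun i => Mq_diag k q i
  have hMoff : ∀ i j : Fin k, i ≠ j → Mq k q i j = c := fun i j h => Mq_const k q h hij
  have hH'Z : H' q = k * Z + K * c := by
    rw [hH']
    calc ∑ σ : Fin k → Bool, (sdot σ σ₁) ^ 2 * Real.exp (q * (sdot σ σ₁) ^ 2)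
        = ∑ σ : Fin k → Bool,
            (∑ l, sgn ((flipE σ₁ σ) l)) ^ 2 * Wq q (flipE σ₁ σ) := by
          refine Finset.sum_congr rfl fun σ _ => ?_
          rw [hexpW, sdot_flipE σ₁ σ]
      _ = ∑ τ : Fin k → Bool, (∑ l, sgn (τ l)) ^ 2 * Wq q τ :=
          Equiv.sum_comp (flipE σ₁) (fun τ => (∑ l, sgn (τ l)) ^ 2 * Wq q τ)
      _ = ∑ τ : Fin k → Bool, ∑ i, ∑ j, Wq q τ * (sgn (τ i) * sgn (τ j)) := by
          refine Finset.sum_congr rfl fun τ _ => ?_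
          rw [hS2, Finset.sum_mul]
          refine Finset.sum_congr rfl fun i _ => ?_
          rw [Finset.sum_mul]
          exact Finset.sum_congr rfl fun j _ => by ring
      _ = ∑ i, ∑ j, Mq k q i j := swap3 _
      _ = k * Z + K * c := sum_matrix _ Z c hMdiag hMoff
  have hdouble : (∑ σ : Fin k → Bool, ∑ σ' : Fin k → Bool,
      Real.exp (q * (sdot σ σ₁) ^ 2) * Real.exp (q * (sdot σ' σ₁) ^ 2) * (sdot σ σ') ^ 2)
      = k * Z ^ 2 + K * c ^ 2 := by
    calc ∑ σ : Fin k → Bool, ∑ σ' : Fin k → Bool,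
          Real.exp (q * (sdot σ σ₁) ^ 2) * Real.exp (q * (sdot σ' σ₁) ^ 2) * (sdot σ σ') ^ 2
        = ∑ σ : Fin k → Bool, ∑ σ' : Fin k → Bool,
            Wq q (flipE σ₁ σ) * Wq q (flipE σ₁ σ') * (sdot (flipE σ₁ σ) (flipE σ₁ σ')) ^ 2 := by
          refine Finset.sum_congr rfl fun σ _ => Finset.sum_congr rfl fun σ' _ => ?_
          rw [hexpW, hexpW, ← sdot_flipE2 σ₁ σ σ']
      _ = ∑ τ : Fin k → Bool, ∑ τ' : Fin k → Bool, Wq q τ * Wq q τ' * (sdot τ τ') ^ 2 := by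
          rw [Equiv.sum_comp (flipE σ₁)
            (fun τ => ∑ σ' : Fin k → Bool, Wq q τ * Wq q (flipE σ₁ σ') * (sdot τ (flipE σ₁ σ')) ^ 2)]
          refine Finset.sum_congr rfl fun τ _ => ?_
          exact Equiv.sum_comp (flipE σ₁) (fun τ' => Wq q τ * Wq q τ' * (sdot τ τ') ^ 2)
      _ = ∑ τ : Fin k → Bool, ∑ τ' : Fin k → Bool, ∑ i, ∑ j,
            (Wq q τ * (sgn (τ i) * sgn (τ j))) * (Wq q τ' * (sgn (τ' i) * sgn (τ' j))) := by
          refine Finset.sum_congr rfl fun τ _ => Finset.sum_congr rfl fun τ' _ => ?_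
          rw [hsq, Finset.mul_sum]
          refine Finset.sum_congr rfl fun i _ => ?_
          rw [Finset.mul_sum]
          exact Finset.sum_congr rfl fun j _ => by ring
      _ = ∑ i, ∑ j, ∑ τ : Fin k → Bool, ∑ τ' : Fin k → Bool,
            (Wq q τ * (sgn (τ i) * sgn (τ j))) * (Wq q τ' * (sgn (τ' i) * sgn (τ' j))) := swap4 _
      _ = ∑ i, ∑ j, (Mq k q i j) ^ 2 := by
          refine Finset.sum_congr rfl fun i _ => Finset.sum_congr rfl fun j _ => ?_
          rw [sq]
          unfold Mq
          rw [Finset.sum_mul_sum]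
      _ = k * Z ^ 2 + K * c ^ 2 :=
          sum_matrix _ (Z ^ 2) (c ^ 2) (fun i => by rw [hMdiag i])
            (fun i j h => by rw [hMoff i j h])
  -- stationarity gives c = 2 q Z / β²
  have hkk : ((k : ℝ) * ((k : ℝ) - 1)) ≠ 0 := by
    have : (2 : ℝ) ≤ (k : ℝ) := by exact_mod_cast hk
    nlinarith
  have hc : c = 2 * q * Z / β ^ 2 := by
    have h1 : q = β ^ 2 / (2 * k * (k - 1)) * (K * c / Z) := by
      rw [hstat, hHZ, hH'Z]
      congr 1
      field_simp
      ring
    have hβ2 : (β : ℝ) ^ 2 ≠ 0 := pow_ne_zero 2 (ne_of_gt hβ)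
    have hKval : K = (k : ℝ) * ((k : ℝ) - 1) := by rw [hKdef]; ring
    rw [hKval] at h1
    have hden : (2 * (k : ℝ) * ((k : ℝ) - 1) * Z) ≠ 0 := by
      intro h
      rcases mul_eq_zero.1 h with h' | h'
      · rcases mul_eq_zero.1 h' with h'' | h''
        · rcases mul_eq_zero.1 h'' with h3 | h3
          · norm_num at h3
          · exact hkk (by rw [h3]; ring)
        · exact hkk (by rw [mul_comm]; rw [h'']; ring)
      · exact hZne h'
    have h2 : q * (2 * (k : ℝ) * ((k : ℝ) - 1) * Z) = β ^ 2 * ((k : ℝ) * ((k : ℝ) - 1) * c) := by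
      rw [h1]
      field_simp
    rw [eq_div_iff hβ2]
    apply mul_left_cancel₀ hkk
    linear_combination (-1 : ℝ) * h2
  -- entropy term
  have hlogp : ∀ σ : Fin k → Bool,
      Real.log (Real.exp (q * (sdot σ σ₁) ^ 2) / H q)
        = q * (sdot σ σ₁) ^ 2 - Real.log Z := by
    intro σ
    rw [hHZ, Real.log_div (Real.exp_ne_zero _) hZne, Real.log_exp]
  have hent : (∑ σ : Fin k → Bool,
      (Real.exp (q * (sdot σ σ₁) ^ 2) / H q) *
        Real.log (Real.exp (q * (sdot σ σ₁) ^ 2) / H q))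
      = q * (k * Z + K * c) / Z - Real.log Z := by
    calc (∑ σ : Fin k → Bool,
        (Real.exp (q * (sdot σ σ₁) ^ 2) / H q) *
          Real.log (Real.exp (q * (sdot σ σ₁) ^ 2) / H q))
        = ∑ σ : Fin k → Bool,
            (q * ((sdot σ σ₁) ^ 2 * Real.exp (q * (sdot σ σ₁) ^ 2)) / Z
              - Real.log Z * (Real.exp (q * (sdot σ σ₁) ^ 2)) / Z) := by
          refine Finset.sum_congr rfl fun σ _ => ?_
          rw [hlogp, hHZ]
          ring
      _ = q * (H' q) / Z - Real.log Z * (H q) / Z := by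
          rw [hH', hH, Finset.sum_sub_distrib]
          congr 1
          · rw [← Finset.sum_div, ← Finset.mul_sum]
          · rw [← Finset.sum_div, ← Finset.mul_sum]
      _ = q * (k * Z + K * c) / Z - Real.log Z := by
          rw [hH'Z, hHZ]
          field_simp
  have hD : (∑ σ : Fin k → Bool, ∑ σ' : Fin k → Bool,
      (Real.exp (q * (sdot σ σ₁) ^ 2) / H q) * (Real.exp (q * (sdot σ' σ₁) ^ 2) / H q)
        * (sdot σ σ') ^ 2)
      = (k * Z ^ 2 + K * c ^ 2) / Z ^ 2 := by
    rw [← hdouble, Finset.sum_div]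
    refine Finset.sum_congr rfl fun σ _ => ?_
    rw [Finset.sum_div]
    refine Finset.sum_congr rfl fun σ' _ => ?_
    rw [hHZ]
    ring
  calc Ffun β (fun σ => Real.exp (q * (sdot σ σ₁) ^ 2) / H q)
      = -(q * (k * Z + K * c) / Z - Real.log Z)
          + β ^ 2 / 4 * ((k * Z ^ 2 + K * c ^ 2) / Z ^ 2) := by
        unfold Ffun
        rw [hent, hD]
    _ = -((k : ℝ) * (k - 1) / β ^ 2) * q ^ 2 - k * q + Real.log (H q) + β ^ 2 * k / 4 := by
        rw [hHZ, hc, hKdef]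
        have hβ2 : (β : ℝ) ^ 2 ≠ 0 := pow_ne_zero 2 (ne_of_gt hβ)
        field_simp
        ring
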